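/- Let U be a 3×3 real positive-definite symmetric matrix, v a unit eigenvector of U, and ê₁ a unit vector with ê₁ · v = 0; set ê₂ = v × ê₁ (cross product) and Û = (−I + 2 ê₁⊗ê₁) U (−I + 2 ê₁⊗ê₁), and assume Û ≠ U. Define n_C¹ = ê₁ and a_C¹ = ξ U ê₂ where ξ = 2 (ê₂ · U⁻²ê₁)/(ê₁ · U⁻²ê₁), and define n_C² = ê₂ and a_C² = η U ê₁ where η = −2 (ê₂ · U²ê₁)/(ê₁ · U²ê₁). Then there exist R₁, R₂ ∈ SO(3) such that R₁ Û = U + a_C¹ ⊗ n_C¹ and R₂ Û = U + a_C² ⊗ n_C², and moreover a_C¹ ⊗ n_C¹ ≠ a_C² ⊗ n_C². -/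

import Mathlib

/-!
For `F = U + (U z) ⊗ e` with `e · z = 0` we have `det F = det U = det Û`, so `F = R Û` for some
`R ∈ SO(3)` as soon as `Fᵀ F = Ûᵀ Û = P U² P`, where `P = reflMat e`. Expanding both sides, this
Gram identity holds whenever `U² (z + 2e)` is parallel to `e`.

For `e = ê₁`, `z = ξ ê₂` this is how `ξ` is chosen: `U⁻² ê₁` is orthogonal to the eigenvector `v`,
so it lies in the plane of `ê₁, ê₂`, and `ξ ê₂ + 2 ê₁` is a multiple of it. For the second
connection, `Û` is also the half-turn of `U` about `ê₂`, since the half-turns about `ê₁` and `ê₂`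
differ by the half-turn about `v`, which commutes with `U`; then `η` is chosen so that
`U² (η ê₁ + 2 ê₂)` has no `ê₁`-component.

The two rank-one matrices differ: otherwise `a_C¹ = 0`, so `ê₁` is an eigenvector of `U²`, hence
of the positive definite `U`, and then the half-turn about `ê₁` commutes with `U`, i.e. `Û = U`.
-/

open Matrix

/-- The 180° rotation matrix `-I + 2 ê⊗ê` for a unit vector `ê`. -/
noncomputable def reflMat (e : Fin 3 → ℝ) : Matrix (Fin 3) (Fin 3) ℝ :=
  -1 + (2 : ℝ) • Matrix.vecMulVec e e

/-- Membership in SO(3): orthogonal with determinant 1. -/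
def SO3 (R : Matrix (Fin 3) (Fin 3) ℝ) : Prop := R * Rᵀ = 1 ∧ R.det = 1

section Algebra

variable {n R : Type*} [Fintype n] [CommRing R]

theorem sum_vecMulVec_self_eq_one [DecidableEq n] {b : n → n → R}
    (h : ∀ i j, b i ⬝ᵥ b j = (1 : Matrix n n R) i j) : ∑ k, vecMulVec (b k) (b k) = 1 := by
  have hrows : (of b * (of b)ᵀ : Matrix n n R) = 1 := by
    ext i j
    simpa [mul_apply, dotProduct] using h i j
  have hcols : (of b)ᵀ * of b = 1 := mul_eq_one_comm.mp hrows
  ext i j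
  simpa [mul_apply, vecMulVec_apply, Matrix.sum_apply] using congr_fun₂ hcols i j

theorem eq_dotProduct_smul_add [DecidableEq n] {u e e' : n → R}
    (hframe : vecMulVec u u + vecMulVec e e + vecMulVec e' e' = 1) (y : n → R) :
    y = (u ⬝ᵥ y) • u + (e ⬝ᵥ y) • e + (e' ⬝ᵥ y) • e' := by
  conv_lhs => rw [← one_mulVec y, ← hframe]
  simp [add_mulVec, vecMulVec_mulVec]

theorem dotProduct_mulVec_of_mulVec_eq_smul {A : Matrix n n R} {u : n → R} {c : R}
    (hA : Aᵀ = A) (hAu : A *ᵥ u = c • u) (x : n → R) : u ⬝ᵥ A *ᵥ x = c * (u ⬝ᵥ x) := by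
  rw [dotProduct_mulVec, ← mulVec_transpose, hA, hAu, smul_dotProduct, smul_eq_mul]

theorem mul_self_mulVec_of_mulVec_eq_smul {A : Matrix n n R} {u : n → R} {c : R}
    (hAu : A *ᵥ u = c • u) : (A * A) *ᵥ u = (c * c) • u := by
  rw [← mulVec_mulVec, hAu, mulVec_smul, hAu, smul_smul]

theorem det_add_vecMulVec_mulVec [DecidableEq n] (U : Matrix n n R) {e z : n → R}
    (hez : e ⬝ᵥ z = 0) : (U + vecMulVec (U *ᵥ z) e).det = U.det := by
  have hfactor : U + vecMulVec (U *ᵥ z) e = U * (1 + vecMulVec z e) := by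
    rw [Matrix.mul_add, Matrix.mul_one, mul_vecMulVec]
  rw [hfactor, det_mul, vecMulVec_eq Unit,
    det_one_add_replicateCol_mul_replicateRow, hez, add_zero, mul_one]

theorem exists_orthogonal_mul_eq [DecidableEq n] {F G : Matrix n n R} (hG : IsUnit G.det)
    (hgram : Fᵀ * F = Gᵀ * G) (hdet : F.det = G.det) :
    ∃ Q : Matrix n n R, Q * Qᵀ = 1 ∧ Q.det = 1 ∧ Q * G = F := by
  refine ⟨F * G⁻¹, ?_, ?_, ?_⟩
  · rw [← mul_eq_one_comm, transpose_mul, transpose_nonsing_inv, Matrix.mul_assoc,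
      ← Matrix.mul_assoc Fᵀ, hgram, Matrix.mul_assoc, mul_nonsing_inv _ hG, Matrix.mul_one,
      ← transpose_nonsing_inv, ← transpose_mul, mul_nonsing_inv _ hG, transpose_one]
  · rw [det_mul, det_nonsing_inv, hdet, Ring.mul_inverse_cancel _ hG]
  · rw [Matrix.mul_assoc, nonsing_inv_mul _ hG, Matrix.mul_one]

end Algebra

section CrossProduct

variable {R : Type*} [CommRing R]

theorem cross_dot_cross_self_eq_one {v e : Fin 3 → R} (hv : v ⬝ᵥ v = 1) (he : e ⬝ᵥ e = 1)
    (hev : e ⬝ᵥ v = 0) : v ⨯₃ e ⬝ᵥ v ⨯₃ e = 1 := by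
  rw [cross_dot_cross, hv, he, hev, dotProduct_comm v e, hev]
  ring

theorem vecMulVec_add_vecMulVec_add_cross_eq_one {v e : Fin 3 → R} (hv : v ⬝ᵥ v = 1)
    (he : e ⬝ᵥ e = 1) (hev : e ⬝ᵥ v = 0) :
    vecMulVec v v + vecMulVec e e + vecMulVec (v ⨯₃ e) (v ⨯₃ e) = 1 := by
  have hframe := sum_vecMulVec_self_eq_one (b := ![v, e, v ⨯₃ e]) fun i j => by
    fin_cases i <;> fin_cases j <;>
      simp [hv, he, hev, dotProduct_comm v e, cross_dot_cross_self_eq_one hv he hev,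
        dot_self_cross, dot_cross_self, dotProduct_comm (v ⨯₃ e), one_apply]
  simpa [Fin.sum_univ_three] using hframe

end CrossProduct

theorem Matrix.PosDef.transpose_eq {n : Type*} {A : Matrix n n ℝ} (hA : A.PosDef) : Aᵀ = A :=
  (isHermitian_iff_isSymm.mp hA.isHermitian).eq

section RealMatrix

variable {n : Type*} [Fintype n]

theorem dotProduct_mul_self_mulVec_pos {A : Matrix n n ℝ} (hA : Aᵀ = A) {x : n → ℝ}
    (hx : A *ᵥ x ≠ 0) : 0 < x ⬝ᵥ (A * A) *ᵥ x := by
  rw [← mulVec_mulVec, dotProduct_mulVec, ← mulVec_transpose, hA]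
  simpa using dotProduct_self_star_pos_iff.mpr hx

theorem Matrix.PosDef.mulVec_ne_zero {A : Matrix n n ℝ} (hA : A.PosDef) {x : n → ℝ}
    (hx : x ≠ 0) : A *ᵥ x ≠ 0 := by
  intro h
  simpa [h] using hA.dotProduct_mulVec_pos hx

theorem Matrix.PosDef.mulVec_eq_sqrt_smul {U : Matrix n n ℝ} (hU : U.PosDef) {x : n → ℝ} {κ : ℝ}
    (hκ : 0 ≤ κ) (hx : (U * U) *ᵥ x = κ • x) : U *ᵥ x = √κ • x := by
  -- `y := U x - √κ x` satisfies `U y = -√κ y`, impossible for `y ≠ 0` as `U` is positive definite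
  set y := U *ᵥ x - √κ • x
  have hUy : U *ᵥ y = -√κ • y := by
    rw [mulVec_sub, mulVec_mulVec, hx, mulVec_smul, smul_sub, smul_smul,
      neg_mul, Real.mul_self_sqrt hκ]
    module
  by_contra hne
  have hpos := hU.dotProduct_mulVec_pos (x := y) (sub_ne_zero.mpr hne)
  rw [hUy, star_trivial, dotProduct_smul, smul_eq_mul] at hpos
  have hyy := dotProduct_star_self_nonneg y
  rw [star_trivial] at hyy
  nlinarith [Real.sqrt_nonneg κ]

end RealMatrix

section HalfTurn

theorem reflMat_transpose (e : Fin 3 → ℝ) : (reflMat e)ᵀ = reflMat e := by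
  simp [reflMat, transpose_vecMulVec]

theorem reflMat_mul_self {e : Fin 3 → ℝ} (he : e ⬝ᵥ e = 1) : reflMat e * reflMat e = 1 := by
  simp only [reflMat, add_mul, mul_add, Matrix.smul_mul, Matrix.mul_smul, vecMulVec_mul_vecMulVec,
    he, one_smul, Matrix.neg_mul, Matrix.mul_neg, Matrix.one_mul, Matrix.mul_one, neg_neg]
  module

theorem reflMat_mul_comm {U : Matrix (Fin 3) (Fin 3) ℝ} {e : Fin 3 → ℝ} {c : ℝ} (hU : Uᵀ = U)
    (hUe : U *ᵥ e = c • e) : reflMat e * U = U * reflMat e := by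
  have hUe' : e ᵥ* U = c • e := by rw [← mulVec_transpose, hU, hUe]
  simp only [reflMat, add_mul, mul_add, Matrix.smul_mul, Matrix.mul_smul, vecMulVec_mul,
    mul_vecMulVec, hUe, hUe', vecMulVec_smul, smul_vecMulVec]
  simp

theorem reflMat_mul_reflMat {u e e' : Fin 3 → ℝ}
    (hframe : vecMulVec u u + vecMulVec e e + vecMulVec e' e' = 1) (hue' : u ⬝ᵥ e' = 0) :
    reflMat u * reflMat e' = reflMat e := by
  have hsum : vecMulVec u u + vecMulVec e' e' = 1 - vecMulVec e e := by
    rw [← hframe]; abel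
  simp only [reflMat, add_mul, mul_add, Matrix.smul_mul, Matrix.mul_smul, vecMulVec_mul_vecMulVec,
    hue', zero_smul, vecMulVec_zero, Matrix.neg_mul, Matrix.mul_neg, Matrix.one_mul,
    Matrix.mul_one, neg_neg]
  linear_combination (norm := module) (-2 : ℝ) • hsum

theorem reflMat_conj_eq_reflMat_conj {U : Matrix (Fin 3) (Fin 3) ℝ} {u e e' : Fin 3 → ℝ}
    {c : ℝ} (hU : Uᵀ = U) (hUu : U *ᵥ u = c • u) (hu : u ⬝ᵥ u = 1)
    (hframe : vecMulVec u u + vecMulVec e e + vecMulVec e' e' = 1) (hue' : u ⬝ᵥ e' = 0) :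
    reflMat e * U * reflMat e = reflMat e' * U * reflMat e' := by
  have hleft : reflMat e = reflMat e' * reflMat u :=
    (reflMat_mul_reflMat (by rw [← hframe]; abel) (by rwa [dotProduct_comm])).symm
  have hright : reflMat e = reflMat u * reflMat e' := (reflMat_mul_reflMat hframe hue').symm
  calc reflMat e * U * reflMat e
      = reflMat e' * reflMat u * U * (reflMat u * reflMat e') := by rw [← hleft, ← hright]
    _ = reflMat e' * (reflMat u * U * reflMat u) * reflMat e' := by simp only [Matrix.mul_assoc]
    _ = reflMat e' * U * reflMat e' := by
        rw [reflMat_mul_comm hU hUu, Matrix.mul_assoc U, reflMat_mul_self hu, Matrix.mul_one]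

theorem transpose_mul_self_reflMat_conj {U : Matrix (Fin 3) (Fin 3) ℝ} {e : Fin 3 → ℝ}
    (hU : Uᵀ = U) (he : e ⬝ᵥ e = 1) :
    (reflMat e * U * reflMat e)ᵀ * (reflMat e * U * reflMat e) =
      reflMat e * (U * U) * reflMat e := by
  simp only [transpose_mul, reflMat_transpose, hU, Matrix.mul_assoc]
  rw [← Matrix.mul_assoc (reflMat e) (reflMat e), reflMat_mul_self he, Matrix.one_mul]

theorem det_reflMat_conj (U : Matrix (Fin 3) (Fin 3) ℝ) {e : Fin 3 → ℝ} (he : e ⬝ᵥ e = 1) :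
    (reflMat e * U * reflMat e).det = U.det := by
  rw [det_mul, det_mul, mul_comm, ← mul_assoc, ← det_mul, reflMat_mul_self he, det_one, one_mul]

end HalfTurn

section Twins

variable {U : Matrix (Fin 3) (Fin 3) ℝ} {e z : Fin 3 → ℝ} {l : ℝ}

theorem transpose_mul_self_add_vecMulVec_mulVec (hU : Uᵀ = U) (he : e ⬝ᵥ e = 1)
    (hez : e ⬝ᵥ z = 0) (hl : (U * U) *ᵥ (z + (2 : ℝ) • e) = l • e) :
    (U + vecMulVec (U *ᵥ z) e)ᵀ * (U + vecMulVec (U *ᵥ z) e) =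
      reflMat e * (U * U) * reflMat e := by
  have hUU : (U * U)ᵀ = U * U := by rw [transpose_mul, hU]
  obtain ⟨w, hw⟩ : ∃ w, (U * U) *ᵥ e = w := ⟨_, rfl⟩
  have hz : (U * U) *ᵥ z = l • e - (2 : ℝ) • w := by
    rw [← hl, mulVec_add, mulVec_smul, hw]; abel
  have hzw : z ⬝ᵥ w = l - 2 * (e ⬝ᵥ w) := by
    rw [← hw, dotProduct_mulVec, ← mulVec_transpose, hUU, dotProduct_comm, hz, hw,
      dotProduct_sub, dotProduct_smul, dotProduct_smul, he, smul_eq_mul, smul_eq_mul, mul_one]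
  have hzz : (U *ᵥ z) ⬝ᵥ (U *ᵥ z) = 4 * (e ⬝ᵥ w) - 2 * l := by
    rw [dotProduct_mulVec, vecMul_mulVec, hU, ← dotProduct_mulVec, hz, dotProduct_sub,
      dotProduct_smul, dotProduct_smul, dotProduct_comm z e, hez, hzw, smul_eq_mul, smul_eq_mul]
    ring
  have hzU : (U *ᵥ z) ᵥ* U = (U * U) *ᵥ z := by
    rw [← mulVec_transpose, hU, mulVec_mulVec]
  have heU : e ᵥ* (U * U) = w := by rw [← mulVec_transpose, hUU, hw]
  have hlhs : (U + vecMulVec (U *ᵥ z) e)ᵀ * (U + vecMulVec (U *ᵥ z) e) =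
      U * U + vecMulVec ((U * U) *ᵥ z) e + vecMulVec e ((U * U) *ᵥ z) +
        ((U *ᵥ z) ⬝ᵥ (U *ᵥ z)) • vecMulVec e e := by
    rw [transpose_add, hU, transpose_vecMulVec, add_mul, mul_add, mul_add, mul_vecMulVec,
      vecMulVec_mul, vecMulVec_mul_vecMulVec, mulVec_mulVec, hzU, vecMulVec_smul]
    abel
  have hrhs : reflMat e * (U * U) * reflMat e =
      U * U - (2 : ℝ) • vecMulVec w e - (2 : ℝ) • vecMulVec e w +
        (4 * (e ⬝ᵥ w)) • vecMulVec e e := by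
    simp only [reflMat, add_mul, mul_add, Matrix.smul_mul, Matrix.mul_smul, Matrix.neg_mul,
      Matrix.mul_neg, Matrix.one_mul, Matrix.mul_one, neg_neg, vecMulVec_mul, heU,
      mul_vecMulVec, neg_mulVec, Matrix.smul_mulVec, vecMulVec_mulVec, op_smul_eq_smul, hw,
      neg_vecMulVec, smul_vecMulVec, dotProduct_comm w e]
    module
  rw [hlhs, hrhs, hz, hzz, vecMulVec_sub, sub_vecMulVec, vecMulVec_smul, smul_vecMulVec,
    vecMulVec_smul, smul_vecMulVec]
  module

theorem exists_SO3_mul_reflMat_conj_eq (hU : U.PosDef) (he : e ⬝ᵥ e = 1) (hez : e ⬝ᵥ z = 0)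
    (hl : (U * U) *ᵥ (z + (2 : ℝ) • e) = l • e) :
    ∃ R, SO3 R ∧ R * (reflMat e * U * reflMat e) = U + vecMulVec (U *ᵥ z) e := by
  have hUt : Uᵀ = U := hU.transpose_eq
  obtain ⟨R, hRRt, hdetR, hR⟩ := exists_orthogonal_mul_eq
    (by rw [det_reflMat_conj U he]; exact (isUnit_iff_isUnit_det U).mp hU.isUnit)
    (by rw [transpose_mul_self_add_vecMulVec_mulVec hUt he hez hl,
      transpose_mul_self_reflMat_conj hUt he])
    (by rw [det_add_vecMulVec_mulVec U hez, det_reflMat_conj U he])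
  exact ⟨R, ⟨hRRt, hdetR⟩, hR⟩

theorem mulVec_ne_zero_of_reflMat_conj_ne (hU : U.PosDef) (he : e ⬝ᵥ e = 1)
    (hl : (U * U) *ᵥ (z + (2 : ℝ) • e) = l • e) (hl0 : 0 ≤ l)
    (hne : reflMat e * U * reflMat e ≠ U) : U *ᵥ z ≠ 0 := by
  intro hUz
  have hz : z = 0 := not_not.mp fun hz => hU.mulVec_ne_zero hz hUz
  have hUUe : (U * U) *ᵥ e = (l / 2) • e := by
    rw [hz, zero_add, mulVec_smul] at hl
    rw [← smul_right_injective _ (two_ne_zero (α := ℝ)) |>.eq_iff, hl, smul_smul]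
    ring_nf
  apply hne
  rw [reflMat_mul_comm hU.transpose_eq (hU.mulVec_eq_sqrt_smul (by positivity) hUUe),
    Matrix.mul_assoc, reflMat_mul_self he, Matrix.mul_one]

end Twins

section OrthonormalFrame

variable {U : Matrix (Fin 3) (Fin 3) ℝ} {v e1 e2 : Fin 3 → ℝ} {μ : ℝ}

theorem exists_mul_self_mulVec_xi_eq_smul (hU : U.PosDef) (hvEig : U *ᵥ v = μ • v) (hμ : μ ≠ 0)
    (hframe : vecMulVec v v + vecMulVec e1 e1 + vecMulVec e2 e2 = 1) (hve1 : v ⬝ᵥ e1 = 0)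
    (he1 : e1 ≠ 0) {ξ : ℝ}
    (hξ : ξ = 2 * (e2 ⬝ᵥ (U⁻¹ * U⁻¹) *ᵥ e1) / (e1 ⬝ᵥ (U⁻¹ * U⁻¹) *ᵥ e1)) :
    ∃ l : ℝ, 0 < l ∧ (U * U) *ᵥ (ξ • e2 + (2 : ℝ) • e1) = l • e1 := by
  have hUt : Uᵀ = U := hU.transpose_eq
  have hUU : (U * U)ᵀ = U * U := by rw [transpose_mul, hUt]
  set y := (U⁻¹ * U⁻¹) *ᵥ e1
  have hUy : (U * U) *ᵥ y = e1 := by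
    have hdet : IsUnit U.det := (isUnit_iff_isUnit_det U).mp hU.isUnit
    rw [mulVec_mulVec, Matrix.mul_assoc, ← Matrix.mul_assoc U U⁻¹, mul_nonsing_inv _ hdet,
      Matrix.one_mul, mul_nonsing_inv _ hdet, one_mulVec]
  have hvy : v ⬝ᵥ y = 0 := by
    have := dotProduct_mulVec_of_mulVec_eq_smul hUU (mul_self_mulVec_of_mulVec_eq_smul hvEig) y
    rw [hUy, hve1] at this
    simpa [hμ] using this.symm
  have hy_pos : 0 < e1 ⬝ᵥ y :=
    dotProduct_mul_self_mulVec_pos (by rw [transpose_nonsing_inv, hUt])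
      (hU.inv.mulVec_ne_zero he1)
  have hy : y = (e1 ⬝ᵥ y) • e1 + (e2 ⬝ᵥ y) • e2 := by
    simpa [hvy] using eq_dotProduct_smul_add hframe y
  refine ⟨2 / (e1 ⬝ᵥ y), by positivity, ?_⟩
  have hx : ξ • e2 + (2 : ℝ) • e1 = (2 / (e1 ⬝ᵥ y)) • y := by
    rw [congrArg ((2 / (e1 ⬝ᵥ y)) • ·) hy, hξ]
    match_scalars <;> field_simp
  rw [hx, mulVec_smul, hUy]

theorem exists_mul_self_mulVec_eta_eq_smul (hU : U.PosDef) (hvEig : U *ᵥ v = μ • v)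
    (hframe : vecMulVec v v + vecMulVec e1 e1 + vecMulVec e2 e2 = 1) (hve1 : v ⬝ᵥ e1 = 0)
    (hve2 : v ⬝ᵥ e2 = 0) (he1 : e1 ≠ 0) {η : ℝ}
    (hη : η = -2 * (e2 ⬝ᵥ (U * U) *ᵥ e1) / (e1 ⬝ᵥ (U * U) *ᵥ e1)) :
    ∃ l : ℝ, (U * U) *ᵥ (η • e1 + (2 : ℝ) • e2) = l • e2 := by
  have hUt : Uᵀ = U := hU.transpose_eq
  have hUU : (U * U)ᵀ = U * U := by rw [transpose_mul, hUt]
  set q := (U * U) *ᵥ (η • e1 + (2 : ℝ) • e2) with hq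
  have hvq : v ⬝ᵥ q = 0 := by
    rw [dotProduct_mulVec_of_mulVec_eq_smul hUU (mul_self_mulVec_of_mulVec_eq_smul hvEig)]
    simp [hve1, hve2]
  have he1q : e1 ⬝ᵥ q = 0 := by
    have hpos : 0 < e1 ⬝ᵥ (U * U) *ᵥ e1 :=
      dotProduct_mul_self_mulVec_pos hUt (hU.mulVec_ne_zero he1)
    have hsymm : e1 ⬝ᵥ (U * U) *ᵥ e2 = e2 ⬝ᵥ (U * U) *ᵥ e1 := by
      rw [dotProduct_mulVec, ← mulVec_transpose, hUU, dotProduct_comm]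
    rw [hq, mulVec_add, mulVec_smul, mulVec_smul, dotProduct_add, dotProduct_smul,
      dotProduct_smul, hsymm, hη, smul_eq_mul, smul_eq_mul]
    field_simp
    ring
  exact ⟨e2 ⬝ᵥ q, by simpa [hvq, he1q] using eq_dotProduct_smul_add hframe q⟩

end OrthonormalFrame

theorem stmt_5 (U : Matrix (Fin 3) (Fin 3) ℝ) (v e1 e2 : Fin 3 → ℝ) (μ : ℝ)
    (hU : U.PosDef) (hv : v ⬝ᵥ v = 1) (hvEig : U.mulVec v = μ • v)
    (he1 : e1 ⬝ᵥ e1 = 1) (hperp : e1 ⬝ᵥ v = 0)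
    (he2 : e2 = crossProduct v e1)
    (Uhat : Matrix (Fin 3) (Fin 3) ℝ)
    (hUhat : Uhat = reflMat e1 * U * reflMat e1)
    (hne : Uhat ≠ U)
    (ξ η : ℝ)
    (hξ : ξ = 2 * (e2 ⬝ᵥ (U⁻¹ * U⁻¹).mulVec e1) / (e1 ⬝ᵥ (U⁻¹ * U⁻¹).mulVec e1))
    (hη : η = -2 * (e2 ⬝ᵥ (U * U).mulVec e1) / (e1 ⬝ᵥ (U * U).mulVec e1))
    (nC1 aC1 nC2 aC2 : Fin 3 → ℝ)
    (hn1 : nC1 = e1) (ha1 : aC1 = ξ • U.mulVec e2)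
    (hn2 : nC2 = e2) (ha2 : aC2 = η • U.mulVec e1) :
    (∃ R1 : Matrix (Fin 3) (Fin 3) ℝ, SO3 R1 ∧
        R1 * Uhat = U + Matrix.vecMulVec aC1 nC1) ∧
    (∃ R2 : Matrix (Fin 3) (Fin 3) ℝ, SO3 R2 ∧
        R2 * Uhat = U + Matrix.vecMulVec aC2 nC2) ∧
    Matrix.vecMulVec aC1 nC1 ≠ Matrix.vecMulVec aC2 nC2 := by
  have hUt : Uᵀ = U := hU.transpose_eq
  have he10 : e1 ≠ 0 := by rintro rfl; simp at he1
  have hμ : μ ≠ 0 := by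
    have hpos := hU.dotProduct_mulVec_pos (x := v) (by rintro rfl; simp at hv)
    rw [star_trivial, hvEig, dotProduct_smul, hv, smul_eq_mul, mul_one] at hpos
    exact hpos.ne'
  have hve1 : v ⬝ᵥ e1 = 0 := by rwa [dotProduct_comm]
  obtain ⟨he2e2, hve2, he1e2, hframe⟩ : e2 ⬝ᵥ e2 = 1 ∧ v ⬝ᵥ e2 = 0 ∧ e1 ⬝ᵥ e2 = 0 ∧
      vecMulVec v v + vecMulVec e1 e1 + vecMulVec e2 e2 = 1 := he2 ▸
    ⟨cross_dot_cross_self_eq_one hv he1 hperp, dot_self_cross v e1, dot_cross_self v e1,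
      vecMulVec_add_vecMulVec_add_cross_eq_one hv he1 hperp⟩
  obtain ⟨l1, hl1_pos, hl1⟩ :=
    exists_mul_self_mulVec_xi_eq_smul hU hvEig hμ hframe hve1 he10 hξ
  obtain ⟨l2, hl2⟩ := exists_mul_self_mulVec_eta_eq_smul hU hvEig hframe hve1 hve2 he10 hη
  have hUhat' : Uhat = reflMat e2 * U * reflMat e2 :=
    hUhat.trans (reflMat_conj_eq_reflMat_conj hUt hvEig hv hframe hve2)
  rw [← mulVec_smul] at ha1 ha2
  subst nC1 nC2 aC1 aC2
  refine ⟨hUhat ▸ exists_SO3_mul_reflMat_conj_eq hU he1 (by simp [he1e2]) hl1,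
    hUhat' ▸ exists_SO3_mul_reflMat_conj_eq hU he2e2 (by simp [dotProduct_comm e2, he1e2]) hl2,
    fun h => mulVec_ne_zero_of_reflMat_conj_ne hU he1 hl1 hl1_pos.le (hUhat ▸ hne) ?_⟩
  simpa [vecMulVec_mulVec, he1, dotProduct_comm e2 e1, he1e2] using congr_arg (· *ᵥ e1) h
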